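/- arXiv:1512.02844 — 3 statements merged into one kernel-verified Lean document; each statement's English description precedes it below -/
import Mathlib

section
/- Let n ≥ 3 and S = {f, rf} in the dihedral group D_n. Then λ₁(D_n, S) ≤ n; moreover λ₁(D_n, S) = n if n is odd, and λ₁(D_n, S) = n − 1 if n is even. -/
/-!
In Mathlib's notation `f = sr 0` and `r f = sr (-1)`. Sending `r i ↦ 2i` and `sr i ↦ 2i + 1`
in `ZMod (2n)` moves every element by `±1` under left multiplication by a generator, so the
Cayley graph of `D_n` for `S = {f, rf}` is a `2n`-cycle and the word length of `g` is at least the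
distance of its image from `0` on that cycle. Alternating words attain this for reflections:
`l_S(sr j) = 2 min(j, n - 1 - j) + 1`. The conjugates of `f` and `rf` are exactly the
reflections, so their lengths are the odd numbers up to `n`, with maximum `n` for odd `n` and
`n - 1` for even `n`.
-/

open DihedralGroup

/-- The word length of `g` with respect to a generating set `S`: the minimal
number of letters of `S` needed to write `g` as a product. -/
noncomputable def wordLength {G : Type*} [Group G] (S : Set G) (g : G) : ℕ :=
  sInf {k | ∃ l : List G, (∀ x ∈ l, x ∈ S) ∧ l.prod = g ∧ l.length = k}

section WordLength

variable {G : Type*} [Group G] {S : Set G}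

theorem wordLength_prod_le_length {l : List G} (hl : ∀ x ∈ l, x ∈ S) :
    wordLength S l.prod ≤ l.length :=
  Nat.sInf_le ⟨l, hl, rfl, rfl⟩

theorem le_length_of_forall_mul_le_add_one (φ : G → ℕ) (h1 : φ 1 = 0)
    (hφ : ∀ s ∈ S, ∀ g, φ (s * g) ≤ φ g + 1) {l : List G} (hl : ∀ x ∈ l, x ∈ S) :
    φ l.prod ≤ l.length := by
  induction l with
  | nil => simp [h1]
  | cons s l ih =>
    simp only [List.mem_cons, forall_eq_or_imp] at hl
    rw [List.prod_cons, List.length_cons]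
    exact (hφ s hl.1 _).trans (Nat.add_le_add_right (ih hl.2) 1)

theorem le_wordLength_of_forall_mul_le_add_one (φ : G → ℕ) (h1 : φ 1 = 0)
    (hφ : ∀ s ∈ S, ∀ g, φ (s * g) ≤ φ g + 1) {l : List G} (hl : ∀ x ∈ l, x ∈ S) :
    φ l.prod ≤ wordLength S l.prod := by
  refine le_csInf ⟨_, l, hl, rfl, rfl⟩ ?_
  rintro k ⟨l', hl', hprod, rfl⟩
  rw [← hprod]
  exact le_length_of_forall_mul_le_add_one φ h1 hφ hl'

end WordLength

namespace ZMod

def doubleHom (n : ℕ) : ZMod n →+ ZMod (2 * n) :=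
  lift n ⟨2 • Int.castAddHom (ZMod (2 * n)), by
    show 2 • ((n : ℤ) : ZMod (2 * n)) = 0
    rw [Int.cast_natCast, nsmul_eq_mul]
    exact_mod_cast natCast_self (2 * n)⟩

theorem doubleHom_natCast {n : ℕ} (k : ℕ) : doubleHom n k = 2 * k := by
  rw [← Int.cast_natCast, doubleHom, lift_coe]
  simp

@[simp]
theorem doubleHom_one {n : ℕ} : doubleHom n 1 = 2 := by
  simpa using doubleHom_natCast (n := n) 1

end ZMod

namespace DihedralGroup

variable {n : ℕ}

theorem r_one_mul_sr_zero : (r 1 * sr 0 : DihedralGroup n) = sr (-1) := by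
  rw [r_mul_sr, zero_sub]

def cyclePos : DihedralGroup n → ZMod (2 * n)
  | r i => ZMod.doubleHom n i
  | sr i => ZMod.doubleHom n i + 1

theorem cyclePos_one : cyclePos (1 : DihedralGroup n) = 0 :=
  map_zero _

theorem cyclePos_mul_eq_add_one_or_sub_one {s : DihedralGroup n}
    (hs : s ∈ ({sr 0, sr (-1)} : Set (DihedralGroup n))) (g : DihedralGroup n) :
    cyclePos (s * g) = cyclePos g + 1 ∨ cyclePos (s * g) = cyclePos g - 1 := by
  rcases hs with rfl | rfl <;> rcases g with i | i
  · left; simp [cyclePos, sr_mul_r]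
  · right; simp [cyclePos, sr_mul_sr]
  · right
    simp only [cyclePos, sr_mul_r, map_add, map_neg, ZMod.doubleHom_one]
    ring
  · left
    simp only [cyclePos, sr_mul_sr, sub_neg_eq_add, map_add, ZMod.doubleHom_one]
    ring

theorem natAbs_valMinAbs_cyclePos_mul_le {s : DihedralGroup n}
    (hs : s ∈ ({sr 0, sr (-1)} : Set (DihedralGroup n))) (g : DihedralGroup n) :
    (cyclePos (s * g)).valMinAbs.natAbs ≤ (cyclePos g).valMinAbs.natAbs + 1 := by
  have hone : (1 : ZMod (2 * n)).valMinAbs.natAbs ≤ 1 := by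
    rcases Nat.eq_zero_or_pos n with rfl | hn
    · rfl
    · rw [← Nat.cast_one, ZMod.valMinAbs_natCast_of_le_half (by omega)]
      rfl
  rcases cyclePos_mul_eq_add_one_or_sub_one hs g with h | h <;> rw [h]
  · exact (ZMod.natAbs_valMinAbs_add_le _ _).trans (by omega)
  · rw [sub_eq_add_neg]
    refine (ZMod.natAbs_valMinAbs_add_le _ _).trans ?_
    have := ZMod.natAbs_valMinAbs_neg (1 : ZMod (2 * n))
    omega

theorem exists_word_sr_natCast (k : ℕ) :
    ∃ l : List (DihedralGroup n), (∀ x ∈ l, x ∈ ({sr 0, sr (-1)} : Set _)) ∧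
      l.prod = sr k ∧ l.length = 2 * k + 1 := by
  refine ⟨sr 0 :: (List.replicate k [sr (-1), sr 0]).flatten, ?_, ?_, ?_⟩
  · simp only [List.mem_cons, List.mem_flatten, List.mem_replicate]
    grind
  · simp [List.prod_flatten, sr_mul_sr, sr_mul_r]
  · simp [mul_comm]

theorem exists_word_sr_neg_one_sub_natCast (k : ℕ) :
    ∃ l : List (DihedralGroup n), (∀ x ∈ l, x ∈ ({sr 0, sr (-1)} : Set _)) ∧
      l.prod = sr (-1 - (k : ZMod n)) ∧ l.length = 2 * k + 1 := by
  refine ⟨sr (-1) :: (List.replicate k [sr 0, sr (-1)]).flatten, ?_, ?_, ?_⟩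
  · simp only [List.mem_cons, List.mem_flatten, List.mem_replicate]
    grind
  · simp [List.prod_flatten, sr_mul_sr, sr_mul_r, sub_eq_add_neg]
  · simp [mul_comm]

theorem natAbs_valMinAbs_cyclePos_sr [NeZero n] (j : ZMod n) :
    (cyclePos (sr j)).valMinAbs.natAbs = 2 * min j.val (n - 1 - j.val) + 1 := by
  have hj := j.val_lt
  have hpos : cyclePos (sr j) = ((2 * j.val + 1 : ℕ) : ZMod (2 * n)) := by
    have hdouble := ZMod.doubleHom_natCast (n := n) j.val
    rw [ZMod.natCast_zmod_val] at hdouble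
    rw [cyclePos, hdouble]
    push_cast
    rfl
  rw [hpos, ZMod.valMinAbs_natAbs_eq_min, ZMod.val_natCast_of_lt (by omega)]
  omega

theorem wordLength_sr [NeZero n] (j : ZMod n) :
    wordLength {sr 0, sr (-1)} (sr j) = 2 * min j.val (n - 1 - j.val) + 1 := by
  obtain ⟨l, hl, hprod, hlen⟩ := exists_word_sr_natCast (n := n) j.val
  rw [ZMod.natCast_zmod_val] at hprod
  refine le_antisymm ?_ ?_
  · rcases le_total j.val (n - 1 - j.val) with h | h
    · rw [min_eq_left h, ← hlen, ← hprod]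
      exact wordLength_prod_le_length hl
    · obtain ⟨l', hl', hprod', hlen'⟩ :=
        exists_word_sr_neg_one_sub_natCast (n := n) (n - 1 - j.val)
      have hcast : -1 - ((n - 1 - j.val : ℕ) : ZMod n) = j := by
        have hj := j.val_lt
        rw [Nat.cast_sub (by omega), Nat.cast_sub (by omega), ZMod.natCast_self,
          ZMod.natCast_zmod_val]
        ring
      rw [min_eq_right h, ← hlen', ← hcast, ← hprod']
      exact wordLength_prod_le_length hl'
  · rw [← natAbs_valMinAbs_cyclePos_sr, ← hprod]
    exact le_wordLength_of_forall_mul_le_add_one (fun g => (cyclePos g).valMinAbs.natAbs)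
      (by simp [cyclePos_one]) (fun s hs => natAbs_valMinAbs_cyclePos_mul_le hs) hl

theorem exists_sr_eq_conj (g : DihedralGroup n) (t : ZMod n) : ∃ u, g * sr t * g⁻¹ = sr u := by
  rcases g with i | i
  · exact ⟨t - i + -i, rfl⟩
  · exact ⟨i - (t - i), rfl⟩

theorem exists_conj_eq_sr (j : ZMod n) :
    ∃ g : DihedralGroup n, ∃ s ∈ ({sr 0, sr (-1)} : Set (DihedralGroup n)),
      g * s * g⁻¹ = sr j := by
  obtain ⟨k, rfl⟩ := ZMod.intCast_surjective j
  rcases Int.even_or_odd' k with ⟨i, rfl | rfl⟩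
  · refine ⟨r (-i), sr 0, Or.inl rfl, ?_⟩
    rw [inv_r, r_mul_sr, sr_mul_r]
    congr 1
    push_cast
    ring
  · refine ⟨r (-(i + 1)), sr (-1), Or.inr rfl, ?_⟩
    rw [inv_r, r_mul_sr, sr_mul_r]
    congr 1
    push_cast
    ring

theorem conjugate_wordLengths_eq [NeZero n] :
    {k | ∃ g : DihedralGroup n, ∃ s ∈ ({sr 0, sr (-1)} : Set (DihedralGroup n)),
        k = wordLength {sr 0, sr (-1)} (g * s * g⁻¹)} =
      Set.range fun j : ZMod n => 2 * min j.val (n - 1 - j.val) + 1 := by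
  ext k
  constructor
  · rintro ⟨g, s, hs, rfl⟩
    obtain ⟨t, rfl⟩ : ∃ t, s = sr t := by rcases hs with rfl | rfl <;> exact ⟨_, rfl⟩
    obtain ⟨u, hu⟩ := exists_sr_eq_conj g t
    exact ⟨u, by rw [hu, wordLength_sr]⟩
  · rintro ⟨j, rfl⟩
    obtain ⟨g, s, hs, h⟩ := exists_conj_eq_sr j
    exact ⟨g, s, hs, by rw [h, wordLength_sr]⟩

end DihedralGroup

theorem stmt9 (n : ℕ) (hn : 3 ≤ n) :
    letI S : Set (DihedralGroup n) := {sr 0, r 1 * sr 0}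
    (∀ g : DihedralGroup n, ∀ s ∈ S, wordLength S (g * s * g⁻¹) ≤ n) ∧
      (Odd n → IsGreatest
        {k | ∃ g : DihedralGroup n, ∃ s ∈ S, k = wordLength S (g * s * g⁻¹)} n) ∧
      (Even n → IsGreatest
        {k | ∃ g : DihedralGroup n, ∃ s ∈ S, k = wordLength S (g * s * g⁻¹)} (n - 1)) := by
  have : NeZero n := ⟨by omega⟩
  simp only [r_one_mul_sr_zero]
  have hbound : n ∈ upperBounds {k | ∃ g : DihedralGroup n, ∃ s ∈ ({sr 0, sr (-1)} : Set _),
      k = wordLength {sr 0, sr (-1)} (g * s * g⁻¹)} := by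
    rw [conjugate_wordLengths_eq]
    rintro _ ⟨j, rfl⟩
    have := j.val_lt
    dsimp only
    omega
  refine ⟨fun g s hs => hbound ⟨g, s, hs, rfl⟩, fun ⟨m, hm⟩ => ⟨?_, hbound⟩,
    fun ⟨m, hm⟩ => ?_⟩
  · rw [conjugate_wordLengths_eq]
    refine ⟨m, ?_⟩
    dsimp only
    rw [ZMod.val_natCast_of_lt (by omega)]
    omega
  · rw [conjugate_wordLengths_eq]
    refine ⟨⟨(m - 1 : ℕ), ?_⟩, ?_⟩
    · dsimp only
      rw [ZMod.val_natCast_of_lt (by omega)]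
      omega
    · rintro _ ⟨j, rfl⟩
      have := j.val_lt
      dsimp only
      omega
end

section
/- Let n > 2 and S = {f, rf, r²f} in D_n. Then S generates D_n and λ₁(D_n, S) ≤ ⌊n/2⌋ + 1. -/
/-!
Every conjugate of a reflection is a reflection, and for reflections `sr a` one has
`sr a₁ * sr a₂ * ⋯ * sr a₂ₖ₊₁ = sr (a₁ - a₂ + a₃ - ⋯ + a₂ₖ₊₁)`. With `aᵢ ∈ {0, -1, -2}` these
alternating sums fill the integer interval `[-2(k+1), 2k]`, i.e. `4k + 3` consecutive integers,
which cover every residue modulo `n` once `k = ⌊n/4⌋`. Hence every reflection is a word of length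
`2⌊n/4⌋ + 1 ≤ ⌊n/2⌋ + 1`; the rotations follow as `r i = sr 0 * sr i`.
-/

open DihedralGroup

open scoped Pointwise

theorem wordLength_le_of_mem_pow {G : Type*} [Group G] {S : Set G} {g : G} {m : ℕ}
    (h : g ∈ S ^ m) : wordLength S g ≤ m := by
  obtain ⟨f, rfl⟩ := Set.mem_pow.1 h
  exact Nat.sInf_le ⟨List.ofFn fun i => (f i : G), by simp, rfl, List.length_ofFn⟩

theorem pow_subset_subgroupClosure {G : Type*} [Group G] (S : Set G) :
    ∀ m : ℕ, S ^ m ⊆ Subgroup.closure S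
  | 0 => by simp
  | m + 1 => by
    rw [pow_succ]
    exact Set.mul_subset_iff.2 fun _ ha _ hb =>
      mul_mem (pow_subset_subgroupClosure S m ha) (Subgroup.subset_closure hb)

theorem ZMod.exists_mem_Ico_intCast_eq {n : ℕ} [NeZero n] (a : ℤ) (m : ZMod n) :
    ∃ t ∈ Set.Ico a (a + n), (t : ZMod n) = m := by
  have hn : (0 : ℤ) < n := by exact_mod_cast Nat.pos_of_neZero n
  refine ⟨a + (m.val - a) % n, ⟨by have := Int.emod_nonneg (m.val - a) hn.ne'; omega,
    by have := Int.emod_lt_of_pos (m.val - a) hn; omega⟩, ?_⟩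
  rw [Int.cast_add, ZMod.intCast_mod, Int.cast_sub, Int.cast_natCast, ZMod.natCast_zmod_val,
    add_sub_cancel]

namespace DihedralGroup

variable {n : ℕ}

theorem exists_conj_sr_eq_sr (g : DihedralGroup n) (c : ZMod n) :
    ∃ m, g * sr c * g⁻¹ = sr m := by
  cases g with
  | r j => exact ⟨c - j - j, by simp [sub_eq_add_neg, add_assoc]⟩
  | sr j => exact ⟨j - (c - j), by simp⟩

/-- The paper's `f`, `r f`, `r² f`, since `r i * sr j = sr (j - i)`. -/
def consecutiveReflections (n : ℕ) : Set (DihedralGroup n) := {sr 0, sr (-1), sr (-2)}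

theorem consecutiveReflections_eq :
    ({sr 0, r 1 * sr 0, (r 1 : DihedralGroup n) ^ 2 * sr 0} : Set (DihedralGroup n)) =
      consecutiveReflections n := by
  simp [consecutiveReflections]

theorem sr_intCast_mem_consecutiveReflections {t : ℤ} (h₀ : -2 ≤ t) (h₁ : t ≤ 0) :
    sr (t : ZMod n) ∈ consecutiveReflections n := by
  obtain rfl | rfl | rfl : t = 0 ∨ t = -1 ∨ t = -2 := by omega
  all_goals simp [consecutiveReflections]

theorem r_intCast_mem_consecutiveReflections_sq {d : ℤ} (h₀ : -2 ≤ d) (h₁ : d ≤ 2) :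
    r (d : ZMod n) ∈ consecutiveReflections n ^ 2 := by
  rw [pow_two]
  rcases le_or_gt 0 d with hd | hd
  · have h : r (d : ZMod n) = sr ((-d : ℤ) : ZMod n) * sr ((0 : ℤ) : ZMod n) := by simp
    rw [h]
    exact Set.mul_mem_mul (sr_intCast_mem_consecutiveReflections (by omega) (by omega))
      (sr_intCast_mem_consecutiveReflections (by omega) le_rfl)
  · have h : r (d : ZMod n) = sr ((0 : ℤ) : ZMod n) * sr (d : ZMod n) := by simp
    rw [h]
    exact Set.mul_mem_mul (sr_intCast_mem_consecutiveReflections (by omega) le_rfl)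
      (sr_intCast_mem_consecutiveReflections h₀ hd.le)

theorem sr_intCast_mem_consecutiveReflections_pow {k : ℕ} {t : ℤ} (h₀ : -2 * (k + 1) ≤ t)
    (h₁ : t ≤ 2 * k) : sr (t : ZMod n) ∈ consecutiveReflections n ^ (2 * k + 1) := by
  induction k generalizing t with
  | zero =>
    rw [pow_one]
    exact sr_intCast_mem_consecutiveReflections (by omega) (by omega)
  | succ k ih =>
    set t' := max (-2 * (k + 1 : ℤ)) (min (2 * k) t)
    have h : sr (t : ZMod n) = r ((t' - t : ℤ) : ZMod n) * sr (t' : ZMod n) := by simp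
    rw [h, show 2 * (k + 1) + 1 = 2 + (2 * k + 1) by ring, pow_add]
    exact Set.mul_mem_mul (r_intCast_mem_consecutiveReflections_sq (by omega) (by omega))
      (ih (by omega) (by omega))

theorem sr_mem_consecutiveReflections_pow [NeZero n] (m : ZMod n) :
    sr m ∈ consecutiveReflections n ^ (2 * (n / 4) + 1) := by
  obtain ⟨t, ⟨h₀, h₁⟩, rfl⟩ := ZMod.exists_mem_Ico_intCast_eq (-2 * (n / 4 + 1 : ℤ)) m
  exact sr_intCast_mem_consecutiveReflections_pow (by omega) (by omega)

theorem closure_consecutiveReflections [NeZero n] :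
    Subgroup.closure (consecutiveReflections n) = ⊤ := by
  have hsr (m : ZMod n) : sr m ∈ Subgroup.closure (consecutiveReflections n) :=
    pow_subset_subgroupClosure _ _ (sr_mem_consecutiveReflections_pow m)
  refine eq_top_iff.2 fun g _ => ?_
  cases g with
  | r i => simpa using mul_mem (hsr 0) (hsr i)
  | sr i => exact hsr i

end DihedralGroup

theorem stmt17 (n : ℕ) (hn : 2 < n) :
    letI S : Set (DihedralGroup n) :=
      {sr 0, r 1 * sr 0, (r 1 : DihedralGroup n) ^ 2 * sr 0}
    Subgroup.closure S = ⊤ ∧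
      ∀ g : DihedralGroup n, ∀ s ∈ S, wordLength S (g * s * g⁻¹) ≤ n / 2 + 1 := by
  have : NeZero n := ⟨by omega⟩
  simp only [consecutiveReflections_eq]
  refine ⟨closure_consecutiveReflections, fun g s hs => ?_⟩
  obtain ⟨c, rfl⟩ : ∃ c, s = sr c := by
    simp only [consecutiveReflections, Set.mem_insert_iff, Set.mem_singleton_iff] at hs
    rcases hs with rfl | rfl | rfl <;> exact ⟨_, rfl⟩
  obtain ⟨m, hm⟩ := exists_conj_sr_eq_sr g c
  rw [hm]
  exact (wordLength_le_of_mem_pow (sr_mem_consecutiveReflections_pow m)).trans (by omega)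
end

section
/- Let a, b be nonnegative integers less than n with 0, a, b pairwise distinct, and suppose S = {f, r^a f, r^b f} generates D_n. Then λ₂(D_n, S) ≤ 2; indeed for all g ∈ D_n and s, s' ∈ S, g s s' g⁻¹ ∈ {1, r^a, r^{-a}, r^b, r^{-b}, r^{a-b}, r^{b-a}}, each of which has length at most 2 over S. -/
open DihedralGroup

lemma wordLength_mul_le {G : Type*} [Group G] (S : Set G) (x y : G)
    (hx : x ∈ S) (hy : y ∈ S) : wordLength S (x * y) ≤ 2 := by
  apply Nat.sInf_le
  exact ⟨[x, y], by rintro z hz; simp at hz; rcases hz with rfl | rfl <;> assumption,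
    by simp, rfl⟩

@[simp] lemma inv_r {n : ℕ} (i : ZMod n) : (r i)⁻¹ = r (-i) := rfl
@[simp] lemma inv_sr {n : ℕ} (i : ZMod n) : (sr i)⁻¹ = sr i := rfl

lemma r_one_zpow {n : ℕ} (z : ℤ) : (r 1 : DihedralGroup n) ^ z = r (z : ZMod n) := by
  obtain ⟨k⟩ | ⟨k⟩ := z
  · simp [zpow_natCast]
  · rw [zpow_negSucc, r_one_pow, _root_.inv_r]
    push_cast
    ring_nf

theorem stmt19 (n : ℕ) (hn : 3 ≤ n) (a b : ℕ) (ha : a < n) (hb : b < n)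
    (ha0 : a ≠ 0) (hb0 : b ≠ 0) (hab : a ≠ b)
    (hgen : Subgroup.closure
      ({sr 0, (r 1 : DihedralGroup n) ^ a * sr 0,
        (r 1 : DihedralGroup n) ^ b * sr 0} : Set (DihedralGroup n)) = ⊤) :
    letI S : Set (DihedralGroup n) :=
      {sr 0, (r 1 : DihedralGroup n) ^ a * sr 0, (r 1 : DihedralGroup n) ^ b * sr 0}
    ∀ g : DihedralGroup n, ∀ s ∈ S, ∀ s' ∈ S,
      g * s * s' * g⁻¹ ∈
        ({1, (r 1 : DihedralGroup n) ^ (a : ℤ), (r 1 : DihedralGroup n) ^ (-(a : ℤ)),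
          (r 1 : DihedralGroup n) ^ (b : ℤ), (r 1 : DihedralGroup n) ^ (-(b : ℤ)),
          (r 1 : DihedralGroup n) ^ ((a : ℤ) - b),
          (r 1 : DihedralGroup n) ^ ((b : ℤ) - a)} : Set (DihedralGroup n)) ∧
      wordLength S (g * s * s' * g⁻¹) ≤ 2 := by
  set S : Set (DihedralGroup n) :=
    {sr 0, (r 1 : DihedralGroup n) ^ a * sr 0, (r 1 : DihedralGroup n) ^ b * sr 0} with hSdef
  intro g s hs s' hs'
  -- names for generators
  set F : DihedralGroup n := sr 0 with hF
  set A : DihedralGroup n := (r 1 : DihedralGroup n) ^ a * sr 0 with hA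
  set B : DihedralGroup n := (r 1 : DihedralGroup n) ^ b * sr 0 with hB
  have hFS : F ∈ S := by left; rfl
  have hAS : A ∈ S := by right; left; rfl
  have hBS : B ∈ S := by right; right; rfl
  have hA' : A = sr (-(a : ZMod n)) := by rw [hA, r_one_pow]; simp
  have hB' : B = sr (-(b : ZMod n)) := by rw [hB, r_one_pow]; simp
  -- the target set rewritten with `r`
  have hset : ({1, (r 1 : DihedralGroup n) ^ (a : ℤ), (r 1 : DihedralGroup n) ^ (-(a : ℤ)),
          (r 1 : DihedralGroup n) ^ (b : ℤ), (r 1 : DihedralGroup n) ^ (-(b : ℤ)),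
          (r 1 : DihedralGroup n) ^ ((a : ℤ) - b),
          (r 1 : DihedralGroup n) ^ ((b : ℤ) - a)} : Set (DihedralGroup n)) =
      ({r 0, r (a : ZMod n), r (-(a : ZMod n)), r (b : ZMod n), r (-(b : ZMod n)),
        r ((a : ZMod n) - (b : ZMod n)), r ((b : ZMod n) - (a : ZMod n))} : Set (DihedralGroup n)) := by
    simp only [_root_.r_one_zpow, one_def]
    push_cast
    rfl
  rw [hset]
  -- key fact: s * s' = r c for some c, and the conjugate is r c or r (-c)
  have key : ∀ c : ZMod n, g * r c * g⁻¹ = r c ∨ g * r c * g⁻¹ = r (-c) := by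
    intro c
    obtain ⟨j⟩ | ⟨j⟩ := g
    · left; simp <;> ring_nf
    · right; simp <;> ring_nf
  -- enumerate the nine cases for (s, s')
  have prods :
      ∀ x y : DihedralGroup n, x ∈ S → y ∈ S →
        ∃ c : ZMod n, x * y = r c ∧
          (c = 0 ∨ c = (a : ZMod n) ∨ c = -(a : ZMod n) ∨ c = (b : ZMod n) ∨
            c = -(b : ZMod n) ∨ c = (a : ZMod n) - (b : ZMod n) ∨
            c = (b : ZMod n) - (a : ZMod n)) := by
    intro x y hx hy
    rcases hx with rfl | rfl | rfl <;> rcases hy with rfl | rfl | rfl <;>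
      simp only [r_one_pow, r_mul_sr, sr_mul_sr, sr_mul_r, r_mul_r, mul_assoc] <;>
      refine ⟨_, rfl, ?_⟩ <;>
      first
        | (left; ring1)
        | (right; left; ring1)
        | (right; right; left; ring1)
        | (right; right; right; left; ring1)
        | (right; right; right; right; left; ring1)
        | (right; right; right; right; right; left; ring1)
        | (right; right; right; right; right; right; ring1)
  have hneg : ∀ c : ZMod n,
      (c = 0 ∨ c = (a : ZMod n) ∨ c = -(a : ZMod n) ∨ c = (b : ZMod n) ∨
        c = -(b : ZMod n) ∨ c = (a : ZMod n) - (b : ZMod n) ∨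
        c = (b : ZMod n) - (a : ZMod n)) →
      (-c = 0 ∨ -c = (a : ZMod n) ∨ -c = -(a : ZMod n) ∨ -c = (b : ZMod n) ∨
        -c = -(b : ZMod n) ∨ -c = (a : ZMod n) - (b : ZMod n) ∨
        -c = (b : ZMod n) - (a : ZMod n)) := by
    intro c hc
    rcases hc with rfl | rfl | rfl | rfl | rfl | rfl | rfl <;>
      first
        | (left; ring1)
        | (right; left; ring1)
        | (right; right; left; ring1)
        | (right; right; right; left; ring1)
        | (right; right; right; right; left; ring1)
        | (right; right; right; right; right; left; ring1)
        | (right; right; right; right; right; right; ring1)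
  have hmem : ∀ c : ZMod n,
      (c = 0 ∨ c = (a : ZMod n) ∨ c = -(a : ZMod n) ∨ c = (b : ZMod n) ∨
        c = -(b : ZMod n) ∨ c = (a : ZMod n) - (b : ZMod n) ∨
        c = (b : ZMod n) - (a : ZMod n)) →
      r c ∈ ({r 0, r (a : ZMod n), r (-(a : ZMod n)), r (b : ZMod n), r (-(b : ZMod n)),
        r ((a : ZMod n) - (b : ZMod n)), r ((b : ZMod n) - (a : ZMod n))} :
          Set (DihedralGroup n)) := by
    intro c hc
    rcases hc with rfl | rfl | rfl | rfl | rfl | rfl | rfl <;> simp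
  have hlen : ∀ c : ZMod n,
      (c = 0 ∨ c = (a : ZMod n) ∨ c = -(a : ZMod n) ∨ c = (b : ZMod n) ∨
        c = -(b : ZMod n) ∨ c = (a : ZMod n) - (b : ZMod n) ∨
        c = (b : ZMod n) - (a : ZMod n)) →
      wordLength S (r c) ≤ 2 := by
    intro c hc
    rcases hc with rfl | rfl | rfl | rfl | rfl | rfl | rfl
    · have h : (r 0 : DihedralGroup n) = F * F := by
        rw [hF, sr_mul_sr]; exact congrArg r (by ring1)
      rw [h]; exact wordLength_mul_le S _ _ hFS hFS
    · have h : (r (a : ZMod n) : DihedralGroup n) = A * F := by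
        rw [hA', hF, sr_mul_sr]; exact congrArg r (by ring1)
      rw [h]; exact wordLength_mul_le S _ _ hAS hFS
    · have h : (r (-(a : ZMod n)) : DihedralGroup n) = F * A := by
        rw [hA', hF, sr_mul_sr]; exact congrArg r (by ring1)
      rw [h]; exact wordLength_mul_le S _ _ hFS hAS
    · have h : (r (b : ZMod n) : DihedralGroup n) = B * F := by
        rw [hB', hF, sr_mul_sr]; exact congrArg r (by ring1)
      rw [h]; exact wordLength_mul_le S _ _ hBS hFS
    · have h : (r (-(b : ZMod n)) : DihedralGroup n) = F * B := by
        rw [hB', hF, sr_mul_sr]; exact congrArg r (by ring1)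
      rw [h]; exact wordLength_mul_le S _ _ hFS hBS
    · have h : (r ((a : ZMod n) - (b : ZMod n)) : DihedralGroup n) = A * B := by
        rw [hA', hB', sr_mul_sr]; exact congrArg r (by ring1)
      rw [h]; exact wordLength_mul_le S _ _ hAS hBS
    · have h : (r ((b : ZMod n) - (a : ZMod n)) : DihedralGroup n) = B * A := by
        rw [hA', hB', sr_mul_sr]; exact congrArg r (by ring1)
      rw [h]; exact wordLength_mul_le S _ _ hBS hAS
  obtain ⟨c, hss, hc⟩ := prods s s' hs hs'
  have hgc : g * s * s' * g⁻¹ = g * r c * g⁻¹ := by rw [mul_assoc g s s', hss]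
  rw [hgc]
  rcases key c with h | h <;> rw [h]
  · exact ⟨hmem c hc, hlen c hc⟩
  · exact ⟨hmem (-c) (hneg c hc), hlen (-c) (hneg c hc)⟩
end
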